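/- Let (k, k₁, k₂) be an orthonormal basis of ℝ³ with N_Λ k, N_Λ k₁ ∈ ℤ³, and let W_{(k)} = φ_{(k)} k₁ and W^c_{(k)} = (1/(λ² N_Λ²)) Φ_{(k)} k₁, where φ_{(k)}(x) = φ_{r}(λ r N_Λ k·x), Φ_{(k)}(x) = Φ_r(λ r N_Λ k·x) and φ = −Φ''. Then for any smooth scalar a on 𝕋³, the field a W_{(k)} + ∇a × curl W^c_{(k)} + curl(∇a × W^c_{(k)}) equals curl curl (a W^c_{(k)}), and in particular is divergence-free. -/

import Mathlib

/-- The partial derivative `∂_{x_i}`. -/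
noncomputable def pder (i : Fin 3) (f : (Fin 3 → ℝ) → ℝ) : (Fin 3 → ℝ) → ℝ :=
  fun x => fderiv ℝ f x (Pi.single i 1)

/-- The Levi-Civita symbol `ε_{ijk}` on `Fin 3`. -/
noncomputable def lc (i j k : Fin 3) : ℝ :=
  (((j : ℕ) : ℝ) - ((i : ℕ) : ℝ)) * (((k : ℕ) : ℝ) - ((j : ℕ) : ℝ)) *
    (((k : ℕ) : ℝ) - ((i : ℕ) : ℝ)) / 2

/-- The curl of a vector field on `ℝ³`. -/
noncomputable def curlV (F : (Fin 3 → ℝ) → Fin 3 → ℝ) : (Fin 3 → ℝ) → Fin 3 → ℝ :=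
  fun x i => ∑ a, ∑ b, lc i a b * pder a (fun y => F y b) x

/-- The cross product of two vectors in `ℝ³`. -/
noncomputable def crossV (u v : Fin 3 → ℝ) : Fin 3 → ℝ :=
  fun i => ∑ a, ∑ b, lc i a b * u a * v b

open scoped ContDiff

section helpers
variable {x : Fin 3 → ℝ} {i : Fin 3} {f g : (Fin 3 → ℝ) → ℝ}

lemma pder_add (hf : DifferentiableAt ℝ f x) (hg : DifferentiableAt ℝ g x) (i : Fin 3) :
    pder i (fun y => f y + g y) x = pder i f x + pder i g x := by
  simp only [pder, fderiv_fun_add hf hg, ContinuousLinearMap.add_apply]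

lemma pder_mul (hf : DifferentiableAt ℝ f x) (hg : DifferentiableAt ℝ g x) (i : Fin 3) :
    pder i (fun y => f y * g y) x = pder i f x * g x + f x * pder i g x := by
  simp only [pder, fderiv_fun_mul hf hg, ContinuousLinearMap.add_apply,
    ContinuousLinearMap.smul_apply, smul_eq_mul]
  ring

lemma pder_const_mul (c : ℝ) (hf : DifferentiableAt ℝ f x) (i : Fin 3) :
    pder i (fun y => c * f y) x = c * pder i f x := by
  simp only [pder, fderiv_const_mul hf c, ContinuousLinearMap.smul_apply, smul_eq_mul]

lemma pder_sum {ι : Type*} (s : Finset ι) (f : ι → (Fin 3 → ℝ) → ℝ)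
    (h : ∀ j ∈ s, DifferentiableAt ℝ (f j) x) :
    pder i (fun y => ∑ j ∈ s, f j y) x = ∑ j ∈ s, pder i (f j) x := by
  simp only [pder, fderiv_fun_sum h, ContinuousLinearMap.sum_apply]

lemma pder_sum2 (f : Fin 3 → Fin 3 → (Fin 3 → ℝ) → ℝ)
    (h : ∀ a b, DifferentiableAt ℝ (f a b) x) :
    pder i (fun y => ∑ a, ∑ b, f a b y) x = ∑ a, ∑ b, pder i (f a b) x := by
  have h1 : ∀ a : Fin 3, DifferentiableAt ℝ (fun y => ∑ b, f a b y) x := fun a =>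
    DifferentiableAt.fun_sum (fun b _ => h a b)
  rw [pder_sum Finset.univ (fun a y => ∑ b, f a b y) (fun a _ => h1 a)]
  exact Finset.sum_congr rfl fun a _ => pder_sum _ _ (fun b _ => h a b)

lemma pder_contDiff (hf : ContDiff ℝ ∞ f) (i : Fin 3) : ContDiff ℝ ∞ (pder i f) :=
  (hf.fderiv_right (by norm_num)).clm_apply contDiff_const

lemma pder_comm (hf : ContDiff ℝ ∞ f) (i j : Fin 3) (x : Fin 3 → ℝ) :
    pder i (pder j f) x = pder j (pder i f) x := by
  have hd : ∀ y, HasFDerivAt f (fderiv ℝ f y) y := fun y =>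
    (hf.differentiable (by norm_num) y).hasFDerivAt
  have hs : ContDiff ℝ ∞ (fderiv ℝ f) := hf.fderiv_right (m := ∞) (by norm_num)
  have hd2 : DifferentiableAt ℝ (fderiv ℝ f) x := (hs.differentiable (by norm_num)) x
  have key := second_derivative_symmetric hd hd2.hasFDerivAt
  have h1 : ∀ (l m : Fin 3), pder l (fun y => fderiv ℝ f y (Pi.single m 1)) x
      = fderiv ℝ (fderiv ℝ f) x (Pi.single l 1) (Pi.single m 1) := by
    intro l m
    show fderiv ℝ (fun y => fderiv ℝ f y (Pi.single m 1)) x (Pi.single l 1) = _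
    rw [fderiv_clm_apply hd2 (differentiableAt_const (Pi.single m 1))]
    simp
  calc pder i (pder j f) x
      = fderiv ℝ (fderiv ℝ f) x (Pi.single i 1) (Pi.single j 1) := h1 i j
    _ = fderiv ℝ (fderiv ℝ f) x (Pi.single j 1) (Pi.single i 1) := key _ _
    _ = pder j (pder i f) x := (h1 j i).symm

lemma pder_comp (G : ℝ → ℝ) (L : ℝ) (k : Fin 3 → ℝ) (i : Fin 3) (x : Fin 3 → ℝ)
    (hG : DifferentiableAt ℝ G (L * ∑ m, k m * x m)) :
    pder i (fun y => G (L * ∑ m, k m * y m)) x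
      = L * k i * deriv G (L * ∑ m, k m * x m) := by
  set ℓ : (Fin 3 → ℝ) →L[ℝ] ℝ :=
    ∑ m, (L * k m) • (ContinuousLinearMap.proj m : ((Fin 3 → ℝ)) →L[ℝ] ℝ) with hℓdef
  have hℓval : ∀ y : Fin 3 → ℝ, ℓ y = L * ∑ m, k m * y m := by
    intro y
    simp [hℓdef, ContinuousLinearMap.sum_apply, Finset.mul_sum, mul_assoc]
  have hlin : HasFDerivAt (fun y : Fin 3 → ℝ => L * ∑ m, k m * y m) ℓ x :=
    ℓ.hasFDerivAt.congr_of_eventuallyEq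
      (Filter.Eventually.of_forall fun y => (hℓval y).symm)
  have hcomp := (hG.hasDerivAt).comp_hasFDerivAt x hlin
  have hfd : fderiv ℝ (fun y => G (L * ∑ m, k m * y m)) x
      = deriv G (L * ∑ m, k m * x m) • ℓ := hcomp.fderiv
  show fderiv ℝ (fun y => G (L * ∑ m, k m * y m)) x (Pi.single i 1) = _
  rw [hfd]
  simp only [ContinuousLinearMap.smul_apply, smul_eq_mul, hℓval]
  have hsingle : ∑ m, k m * Pi.single (M := fun _ : Fin 3 => ℝ) i 1 m = k i := by
    simp [Pi.single_apply, mul_ite, Finset.sum_ite_eq']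
  rw [hsingle]; ring

lemma div_curl (F : (Fin 3 → ℝ) → Fin 3 → ℝ)
    (hF : ∀ b, ContDiff ℝ ∞ (fun y => F y b)) (x : Fin 3 → ℝ) :
    ∑ i, pder i (fun y => curlV F y i) x = 0 := by
  have hd : ∀ a b : Fin 3, ContDiff ℝ ∞ (pder a fun y => F y b) := fun a b =>
    pder_contDiff (hF b) a
  have step : ∀ i : Fin 3, pder i (fun y => curlV F y i) x
      = ∑ a, ∑ b, lc i a b * pder i (pder a fun y => F y b) x := by
    intro i
    have h2 := pder_sum2 (x := x) (i := i)
      (fun a b => fun y => lc i a b * pder a (fun z => F z b) y)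
      (fun a b => (((hd a b).differentiable (by norm_num)) x).const_mul (lc i a b))
    rw [show (fun y => curlV F y i)
        = (fun y => ∑ a, ∑ b, lc i a b * pder a (fun z => F z b) y) from rfl, h2]
    exact Finset.sum_congr rfl fun a _ => Finset.sum_congr rfl fun b _ =>
      pder_const_mul _ (((hd a b).differentiable (by norm_num)) x) i
  rw [Finset.sum_congr rfl fun i _ => step i]
  have hsymm : ∀ p q b : Fin 3, pder p (pder q fun y => F y b) x
      = pder q (pder p fun y => F y b) x := fun p q b => pder_comm (hF b) p q x
  simp only [Fin.sum_univ_three]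
  norm_num [lc]
  linear_combination hsymm 0 1 2 + hsymm 2 0 1 + hsymm 1 2 0

end helpers

/-- For the intermittent shear flow `W_{(k)} = φ_{(k)} k₁` and its potential
`W^c_{(k)} = (λ² N_Λ²)⁻¹ Φ_{(k)} k₁` (with `φ = -Φ''` and `(k, k₁, k₂)` an orthonormal
basis with `N_Λ k, N_Λ k₁ ∈ ℤ³`), for any smooth scalar `a`:
`a W_{(k)} + ∇a × curl W^c_{(k)} + curl(∇a × W^c_{(k)}) = curl curl (a W^c_{(k)})`,
and in particular this field is divergence-free. -/
theorem stmt13 (Φ : ℝ → ℝ) (hΦ : ContDiff ℝ (⊤ : ℕ∞) Φ)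
    (hsupp : tsupport Φ ⊆ Set.Icc (-1) 1)
    (r lam : ℝ) (hr : 0 < r) (hlam : 0 < lam) (NΛ : ℕ+)
    (k k₁ k₂ : Fin 3 → ℝ)
    (hk : ∑ i, k i ^ 2 = 1) (hk₁ : ∑ i, k₁ i ^ 2 = 1) (hk₂ : ∑ i, k₂ i ^ 2 = 1)
    (hkk₁ : ∑ i, k i * k₁ i = 0) (hkk₂ : ∑ i, k i * k₂ i = 0)
    (hk₁k₂ : ∑ i, k₁ i * k₂ i = 0)
    (hkZ : ∀ i, ∃ z : ℤ, ((NΛ : ℕ) : ℝ) * k i = (z : ℝ))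
    (hk₁Z : ∀ i, ∃ z : ℤ, ((NΛ : ℕ) : ℝ) * k₁ i = (z : ℝ))
    (a : (Fin 3 → ℝ) → ℝ) (ha : ContDiff ℝ (⊤ : ℕ∞) a) :
    let φr : ℝ → ℝ := fun y => (Real.sqrt r)⁻¹ * (-(deriv (deriv Φ) (y / r)))
    let Φr : ℝ → ℝ := fun y => (Real.sqrt r)⁻¹ * Φ (y / r)
    let W : (Fin 3 → ℝ) → Fin 3 → ℝ := fun x i =>
      φr (lam * r * ((NΛ : ℕ) : ℝ) * ∑ m, k m * x m) * k₁ i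
    let Wc : (Fin 3 → ℝ) → Fin 3 → ℝ := fun x i =>
      (lam ^ 2 * ((NΛ : ℕ) : ℝ) ^ 2)⁻¹ *
        Φr (lam * r * ((NΛ : ℕ) : ℝ) * ∑ m, k m * x m) * k₁ i
    (∀ x i,
        a x * W x i + crossV (fun j => pder j a x) (curlV Wc x) i
            + curlV (fun y => crossV (fun j => pder j a y) (Wc y)) x i
          = curlV (curlV fun y j => a y * Wc y j) x i) ∧
      ∀ x, ∑ i, pder i
          (fun y => a y * W y i + crossV (fun j => pder j a y) (curlV Wc y) i
            + curlV (fun z => crossV (fun j => pder j a z) (Wc z)) y i) x = 0 := by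
  intro φr Φr W Wc
  have hΦs : ContDiff ℝ ∞ Φ := hΦ.of_le (by simp)
  have has : ContDiff ℝ ∞ a := ha.of_le (by simp)
  have hN0 : (0:ℝ) < ((NΛ : ℕ) : ℝ) := by exact_mod_cast NΛ.pos
  have hrne : r ≠ 0 := ne_of_gt hr
  have hlamne : lam ≠ 0 := ne_of_gt hlam
  set N : ℝ := ((NΛ : ℕ) : ℝ) with hN
  set L : ℝ := lam * r * N with hLdef
  set c : ℝ := (lam ^ 2 * N ^ 2)⁻¹ with hcdef
  set h0 : (Fin 3 → ℝ) → ℝ := fun y => Φr (L * ∑ m, k m * y m) with hh0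
  set h1 : (Fin 3 → ℝ) → ℝ := fun y => deriv Φr (L * ∑ m, k m * y m) with hh1
  set h2d : (Fin 3 → ℝ) → ℝ := fun y => deriv (deriv Φr) (L * ∑ m, k m * y m) with hh2
  have hΦrs : ContDiff ℝ ∞ Φr := contDiff_const.mul (hΦs.comp (contDiff_id.div_const r))
  have hΦr1 : ContDiff ℝ ∞ (deriv Φr) := (contDiff_infty_iff_deriv.mp hΦrs).2
  have hlins : ContDiff ℝ ∞ (fun y : Fin 3 → ℝ => L * ∑ m, k m * y m) :=
    contDiff_const.mul (ContDiff.sum fun m _ => contDiff_const.mul (contDiff_apply ℝ ℝ m))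
  have hh0s : ContDiff ℝ ∞ h0 := hΦrs.comp hlins
  have hh1s : ContDiff ℝ ∞ h1 := hΦr1.comp hlins
  have da : ∀ y, DifferentiableAt ℝ a y := fun y => has.differentiable (by norm_num) y
  have dpa : ∀ (j : Fin 3) y, DifferentiableAt ℝ (pder j a) y := fun j y =>
    (pder_contDiff has j).differentiable (by norm_num) y
  have d0 : ∀ y, DifferentiableAt ℝ h0 y := fun y => hh0s.differentiable (by norm_num) y
  have d1 : ∀ y, DifferentiableAt ℝ h1 y := fun y => hh1s.differentiable (by norm_num) y
  have hpd0 : ∀ (j : Fin 3) x, pder j h0 x = L * k j * h1 x := fun j x =>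
    pder_comp Φr L k j x (hΦrs.differentiable (by norm_num) _)
  have hpd1 : ∀ (j : Fin 3) x, pder j h1 x = L * k j * h2d x := fun j x =>
    pder_comp (deriv Φr) L k j x (hΦr1.differentiable (by norm_num) _)
  -- derivatives of Φr
  have hderΦr : ∀ z, deriv Φr z = (Real.sqrt r)⁻¹ * r⁻¹ * deriv Φ (z / r) := by
    intro z
    have h1' : HasDerivAt (fun y : ℝ => y / r) (1 / r) z := (hasDerivAt_id z).div_const r
    have h2' : HasDerivAt Φ (deriv Φ (z / r)) (z / r) :=
      (hΦs.differentiable (by norm_num) _).hasDerivAt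
    have h3 : HasDerivAt (fun y => Φ (y / r)) (deriv Φ (z / r) * (1 / r)) z := h2'.comp z h1'
    have h4 : HasDerivAt Φr ((Real.sqrt r)⁻¹ * (deriv Φ (z / r) * (1 / r))) z :=
      HasDerivAt.const_mul _ h3
    rw [h4.deriv]; field_simp
  have hderΦr' : deriv Φr = fun z => (Real.sqrt r)⁻¹ * r⁻¹ * deriv Φ (z / r) := funext hderΦr
  have hder2Φr : ∀ z, deriv (deriv Φr) z
      = (Real.sqrt r)⁻¹ * r⁻¹ * r⁻¹ * deriv (deriv Φ) (z / r) := by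
    intro z
    rw [hderΦr']
    have h1' : HasDerivAt (fun y : ℝ => y / r) (1 / r) z := (hasDerivAt_id z).div_const r
    have h2' : HasDerivAt (deriv Φ) (deriv (deriv Φ) (z / r)) (z / r) :=
      (((contDiff_infty_iff_deriv.mp hΦs).2).differentiable (by norm_num) _).hasDerivAt
    have h3 : HasDerivAt (fun y => deriv Φ (y / r)) (deriv (deriv Φ) (z / r) * (1 / r)) z :=
      by have := h2'.comp z h1'; exact this
    have h4 := HasDerivAt.const_mul ((Real.sqrt r)⁻¹ * r⁻¹) h3
    rw [h4.deriv]; field_simp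
  have hφrval : ∀ z, φr z = -(r ^ 2) * deriv (deriv Φr) z := by
    intro z
    show (Real.sqrt r)⁻¹ * (-(deriv (deriv Φ) (z / r))) = _
    rw [hder2Φr]
    field_simp
  -- pointwise values
  have hWcval : ∀ y (q : Fin 3), Wc y q = c * h0 y * k₁ q := fun _ _ => rfl
  have dWc : ∀ (q : Fin 3) y, DifferentiableAt ℝ (fun z => Wc z q) y := by
    intro q y
    have h : (fun z => Wc z q) = fun z => c * k₁ q * h0 z := by
      funext z; rw [hWcval]; ring
    rw [h]; exact (d0 y).const_mul _
  have hpWc : ∀ (p q : Fin 3) x, pder p (fun y => Wc y q) x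
      = c * k₁ q * (L * k p * h1 x) := by
    intro p q x
    have hfun : (fun y => Wc y q) = fun y => (c * k₁ q) * h0 y := by
      funext y; rw [hWcval]; ring
    rw [hfun, pder_const_mul _ (d0 x) p, hpd0 p x]
  have ecurlWc : ∀ x (b : Fin 3), curlV Wc x b
      = ∑ p, ∑ q, lc b p q * (c * k₁ q * (L * k p * h1 x)) := by
    intro x b
    show ∑ p, ∑ q, lc b p q * pder p (fun y => Wc y q) x = _
    exact Finset.sum_congr rfl fun p _ => Finset.sum_congr rfl fun q _ => by
      rw [hpWc p q x]
  have hpaWc : ∀ (p q : Fin 3) x, pder p (fun y => a y * Wc y q) x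
      = pder p a x * (c * h0 x * k₁ q) + a x * (c * k₁ q * (L * k p * h1 x)) := by
    intro p q x
    rw [pder_mul (da x) (dWc q x) p, hpWc p q x, hWcval]
  have hpcross : ∀ (m b : Fin 3) x,
      pder m (fun y => crossV (fun j => pder j a y) (Wc y) b) x
      = ∑ p, ∑ q, lc b p q * c * k₁ q *
          (pder m (pder p a) x * h0 x + pder p a x * (L * k m * h1 x)) := by
    intro m b x
    have hfn : (fun y => crossV (fun j => pder j a y) (Wc y) b)
        = fun y => ∑ p, ∑ q, lc b p q * c * k₁ q * (pder p a y * h0 y) := by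
      funext y
      show ∑ p, ∑ q, lc b p q * pder p a y * Wc y q = _
      refine Finset.sum_congr rfl fun p _ => Finset.sum_congr rfl fun q _ => ?_
      rw [hWcval]; ring
    rw [hfn, pder_sum2 (fun p q y => lc b p q * c * k₁ q * (pder p a y * h0 y))
      (fun p q => ((dpa p x).mul (d0 x)).const_mul _)]
    refine Finset.sum_congr rfl fun p _ => Finset.sum_congr rfl fun q _ => ?_
    rw [pder_const_mul _ ((dpa p x).fun_mul (d0 x)) m, pder_mul (dpa p x) (d0 x) m, hpd0 m x]
  have hpcurlaWc : ∀ (m b : Fin 3) x,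
      pder m (fun y => curlV (fun z j => a z * Wc z j) y b) x
      = ∑ p, ∑ q, lc b p q * c * k₁ q *
          (pder m (pder p a) x * h0 x + pder p a x * (L * k m * h1 x)
            + L * k p * (pder m a x * h1 x + a x * (L * k m * h2d x))) := by
    intro m b x
    have hfn : (fun y => curlV (fun z j => a z * Wc z j) y b)
        = fun y => ∑ p, ∑ q, lc b p q * c * k₁ q *
            (pder p a y * h0 y + L * k p * (a y * h1 y)) := by
      funext y
      show ∑ p, ∑ q, lc b p q * pder p (fun z => a z * Wc z q) y = _
      refine Finset.sum_congr rfl fun p _ => Finset.sum_congr rfl fun q _ => ?_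
      rw [hpaWc p q y]; ring
    rw [hfn, pder_sum2 (fun p q y => lc b p q * c * k₁ q *
        (pder p a y * h0 y + L * k p * (a y * h1 y)))
        (fun p q => (((dpa p x).mul (d0 x)).add
          (((da x).mul (d1 x)).const_mul _)).const_mul _)]
    refine Finset.sum_congr rfl fun p _ => Finset.sum_congr rfl fun q _ => ?_
    rw [pder_const_mul _ (((dpa p x).fun_mul (d0 x)).fun_add (((da x).fun_mul (d1 x)).const_mul _)) m,
        pder_add ((dpa p x).fun_mul (d0 x)) (((da x).fun_mul (d1 x)).const_mul _) m,
        pder_mul (dpa p x) (d0 x) m,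
        pder_const_mul _ ((da x).fun_mul (d1 x)) m,
        pder_mul (da x) (d1 x) m, hpd0 m x, hpd1 m x]
  have hW1 : ∀ x (i : Fin 3), a x * W x i = a x * (-(r ^ 2) * h2d x * k₁ i) := by
    intro x i
    have h : W x i = φr (L * ∑ m, k m * x m) * k₁ i := rfl
    rw [h, hφrval]
  have hk' : k 0 ^ 2 + k 1 ^ 2 + k 2 ^ 2 = 1 := by
    simpa [Fin.sum_univ_three] using hk
  have hkk₁' : k 0 * k₁ 0 + k 1 * k₁ 1 + k 2 * k₁ 2 = 0 := by
    simpa [Fin.sum_univ_three] using hkk₁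
  have hcL : c * L ^ 2 = r ^ 2 := by
    rw [hcdef, hLdef]
    field_simp
  clear_value N L c h0 h1 h2d
  have key : ∀ x i,
      a x * W x i + crossV (fun j => pder j a x) (curlV Wc x) i
          + curlV (fun y => crossV (fun j => pder j a y) (Wc y)) x i
        = curlV (curlV fun y j => a y * Wc y j) x i := by
    intro x i
    have e4 : curlV (curlV fun y j => a y * Wc y j) x i
        = ∑ m, ∑ b, lc i m b *
            pder m (fun y => curlV (fun z j => a z * Wc z j) y b) x := rfl
    have e3 : curlV (fun y => crossV (fun j => pder j a y) (Wc y)) x i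
        = ∑ m, ∑ b, lc i m b *
            pder m (fun y => crossV (fun j => pder j a y) (Wc y) b) x := rfl
    have e2 : crossV (fun j => pder j a x) (curlV Wc x) i
        = ∑ p, ∑ b, lc i p b * pder p a x * curlV Wc x b := rfl
    rw [e4, e3, e2, hW1]
    simp only [hpcurlaWc, hpcross, ecurlWc]
    have hsya : ∀ p q : Fin 3, pder p (pder q a) x = pder q (pder p a) x := fun p q =>
      pder_comm has p q x
    fin_cases i
    · simp only [Fin.sum_univ_three]
      norm_num [lc]
      linear_combination (a x * h2d x * c * L ^ 2 * k₁ 0) * hk'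
        - (a x * h2d x * c * L ^ 2 * k 0) * hkk₁'
        + (a x * h2d x * k₁ 0) * hcL
    · simp only [Fin.sum_univ_three]
      norm_num [lc]
      linear_combination (a x * h2d x * c * L ^ 2 * k₁ 1) * hk'
        - (a x * h2d x * c * L ^ 2 * k 1) * hkk₁'
        + (a x * h2d x * k₁ 1) * hcL
    · have h2fin : (⟨2, by omega⟩ : Fin 3) = 2 := rfl
      simp only [Fin.sum_univ_three, h2fin]
      norm_num [lc]
      linear_combination (a x * h2d x * c * L ^ 2 * k₁ 2) * hk'
        - (a x * h2d x * c * L ^ 2 * k 2) * hkk₁'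
        + (a x * h2d x * k₁ 2) * hcL
  refine ⟨key, ?_⟩
  intro x
  have hfeq : ∀ i : Fin 3,
      (fun y => a y * W y i + crossV (fun j => pder j a y) (curlV Wc y) i
          + curlV (fun z => crossV (fun j => pder j a z) (Wc z)) y i)
        = fun y => curlV (curlV fun z j => a z * Wc z j) y i := by
    intro i; funext y; exact key y i
  have hrw : ∑ i, pder i
        (fun y => a y * W y i + crossV (fun j => pder j a y) (curlV Wc y) i
          + curlV (fun z => crossV (fun j => pder j a z) (Wc z)) y i) x
      = ∑ i, pder i (fun y => curlV (curlV fun z j => a z * Wc z j) y i) x :=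
    Finset.sum_congr rfl fun i _ => by rw [hfeq i]
  rw [hrw]
  have hg : ∀ q : Fin 3, ContDiff ℝ ∞ (fun z => Wc z q) := by
    intro q
    have h : (fun z => Wc z q) = fun z => c * h0 z * k₁ q := funext fun z => hWcval z q
    rw [h]
    exact (contDiff_const.mul hh0s).mul contDiff_const
  have hcurlsm : ∀ b : Fin 3,
      ContDiff ℝ ∞ (fun y => curlV (fun z j => a z * Wc z j) y b) := by
    intro b
    have h : (fun y => curlV (fun z j => a z * Wc z j) y b)
        = fun y => ∑ p, ∑ q, lc b p q * pder p (fun z => a z * Wc z q) y := rfl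
    rw [h]
    exact ContDiff.sum fun p _ => ContDiff.sum fun q _ =>
      contDiff_const.mul (pder_contDiff (has.mul (hg q)) p)
  exact div_curl _ hcurlsm x
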